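/- arXiv:2411.15817 — 2 statements merged into one kernel-verified Lean document; each statement's English description precedes it below -/
import Mathlib

section
/- The function S(μ) = log Γ(μ) + μ − (μ−1)ψ(μ) is strictly increasing on (0, ∞), with S(μ) → −∞ as μ → 0⁺ and S(μ) → +∞ as μ → ∞. -/
open Filter

/-- Digamma `ψ(z) = Γ'(z)/Γ(z)`. -/
noncomputable def digamma (z : ℝ) : ℝ := deriv Real.Gamma z / Real.Gamma z

/-!
Differentiating, `S'(μ) = 1 - (μ - 1) ψ'(μ)`, where `ψ'(μ) = ∑ (μ + m)⁻²` is obtained by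
differentiating termwise (twice) the Bohr–Mollerup limit
`log Γ(x) = lim (x log n + log n! - ∑_{m ≤ n} log (x + m))`.
Comparing with the telescoping sum `∑ ((μ + m - ½)⁻¹ - (μ + m + ½)⁻¹)` gives `ψ'(μ) ≤ (μ - ½)⁻¹`,
so `S' > 0`, and `S' ≥ 1/(2μ)` for `μ ≥ 1`, whence `S(μ) ≥ S(1) + ½ log μ`. Near `0`, the
functional equations `Γ(μ + 1) = μ Γ(μ)` and `ψ(μ + 1) = ψ(μ) + 1/μ` give
`S(μ) = O(1) - log μ - 1/μ`.
-/

open Real Set Topology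

lemma summable_inv_add_one_sq : Summable fun m : ℕ => (((m : ℝ) + 1) ^ 2)⁻¹ := by
  exact_mod_cast (summable_nat_add_iff 1).mpr (Real.summable_nat_pow_inv.mpr one_lt_two)

lemma abs_inv_add_one_sub_inv_le {x : ℝ} (hx : 0 ≤ x) (m : ℕ) :
    |((m : ℝ) + 1)⁻¹ - (x + m + 1)⁻¹| ≤ x * (((m : ℝ) + 1) ^ 2)⁻¹ := by
  have hm : (0 : ℝ) < m + 1 := by positivity
  have hxm : 0 < x + m + 1 := by positivity
  have heq : ((m : ℝ) + 1)⁻¹ - (x + m + 1)⁻¹ = x / ((m + 1) * (x + m + 1)) := by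
    field_simp; ring
  rw [heq, abs_of_nonneg (by positivity), div_eq_mul_inv]
  gcongr
  nlinarith

lemma hasDerivAt_logGammaSeq (n : ℕ) {x : ℝ} (hx : 0 < x) :
    HasDerivAt (fun y => BohrMollerup.logGammaSeq y n)
      (log n - ∑ m ∈ Finset.range (n + 1), (x + m)⁻¹) x := by
  have hlog : HasDerivAt (fun y : ℝ => ∑ m ∈ Finset.range (n + 1), log (y + m))
      (∑ m ∈ Finset.range (n + 1), (x + m)⁻¹) x :=
    HasDerivAt.fun_sum fun m _ => by
      simpa using ((hasDerivAt_id x).add_const (m : ℝ)).log (by positivity)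
  simpa [BohrMollerup.logGammaSeq] using
    (((hasDerivAt_id x).mul_const (log n)).add_const (log n.factorial)).fun_sub hlog

lemma log_sub_sum_inv_add_eq (n : ℕ) (x : ℝ) :
    log n - ∑ m ∈ Finset.range (n + 1), (x + m)⁻¹ =
      (log n - harmonic n) - x⁻¹ + ∑ m ∈ Finset.range n, (((m : ℝ) + 1)⁻¹ - (x + m + 1)⁻¹) := by
  simp only [Finset.sum_range_succ', Finset.sum_sub_distrib, harmonic, Rat.cast_sum]
  push_cast
  ring_nf

lemma tendstoUniformlyOn_deriv_logGammaSeq (b : ℝ) :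
    TendstoUniformlyOn (fun (n : ℕ) (x : ℝ) => log n - ∑ m ∈ Finset.range (n + 1), (x + m)⁻¹)
      (fun x => -eulerMascheroniConstant - x⁻¹ + ∑' m : ℕ, (((m : ℝ) + 1)⁻¹ - (x + m + 1)⁻¹))
      atTop (Ioo 0 b) := by
  simp_rw [log_sub_sum_inv_add_eq]
  have hconst :
      Tendsto (fun n : ℕ => log n - harmonic n) atTop (𝓝 (-eulerMascheroniConstant)) := by
    simpa using tendsto_harmonic_sub_log.neg
  have hinv : TendstoUniformlyOn (fun (_ : ℕ) (x : ℝ) => x⁻¹) (fun x => x⁻¹) atTop (Ioo 0 b) :=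
    fun _ hu => Eventually.of_forall fun _ _ _ => refl_mem_uniformity hu
  refine ((hconst.tendstoUniformlyOn_const _).fun_sub hinv).fun_add (tendstoUniformlyOn_tsum_nat
      (summable_inv_add_one_sq.mul_left b) fun m x hx => ?_)
  exact (abs_inv_add_one_sub_inv_le hx.1.le m).trans (by gcongr; exact hx.2.le)

lemma hasDerivAt_log_Gamma {x : ℝ} (hx : 0 < x) :
    HasDerivAt (fun y => log (Gamma y)) (digamma x) x :=
  (differentiableAt_Gamma fun m => by linarith [(m.cast_nonneg : (0 : ℝ) ≤ m)]).hasDerivAt.log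
    (Gamma_pos_of_pos hx).ne'

lemma digamma_eq_tsum {x : ℝ} (hx : 0 < x) :
    digamma x = -eulerMascheroniConstant - x⁻¹ + ∑' m : ℕ, (((m : ℝ) + 1)⁻¹ - (x + m + 1)⁻¹) := by
  refine (hasDerivAt_log_Gamma hx).unique <| hasDerivAt_of_tendstoUniformlyOn isOpen_Ioo
    (tendstoUniformlyOn_deriv_logGammaSeq (x + 1))
    (Eventually.of_forall fun n y hy => hasDerivAt_logGammaSeq n hy.1)
    (fun y hy => BohrMollerup.tendsto_log_gamma hy.1) ⟨hx, by linarith⟩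

noncomputable def trigamma (x : ℝ) : ℝ := ∑' m : ℕ, ((x + m) ^ 2)⁻¹

lemma inv_add_add_one_sq_le {x : ℝ} (hx : 0 ≤ x) (m : ℕ) :
    ((x + m + 1) ^ 2)⁻¹ ≤ (((m : ℝ) + 1) ^ 2)⁻¹ :=
  inv_anti₀ (by positivity) (by gcongr; linarith)

lemma trigamma_eq_inv_sq_add_tsum {x : ℝ} (hx : 0 < x) :
    trigamma x = (x ^ 2)⁻¹ + ∑' m : ℕ, ((x + m + 1) ^ 2)⁻¹ := by
  have hsum : Summable fun m : ℕ => ((x + (m + 1 : ℕ)) ^ 2)⁻¹ := by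
    refine summable_inv_add_one_sq.of_nonneg_of_le (fun m => by positivity) fun m => ?_
    simpa [add_assoc] using inv_add_add_one_sq_le hx.le m
  rw [trigamma,
    ((summable_nat_add_iff (f := fun m : ℕ => ((x + m) ^ 2)⁻¹) 1).mp hsum).tsum_eq_zero_add]
  simp [add_assoc]

lemma hasDerivAt_digamma {x : ℝ} (hx : 0 < x) : HasDerivAt digamma (trigamma x) x := by
  have hterm (m : ℕ) (y : ℝ) (hy : 0 < y) :
      HasDerivAt (fun z : ℝ => ((m : ℝ) + 1)⁻¹ - (z + m + 1)⁻¹) ((y + m + 1) ^ 2)⁻¹ y := by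
    have := (((hasDerivAt_id y).add_const (m : ℝ)).add_const (1 : ℝ)).fun_inv
      (by simp only [id]; positivity)
    simpa [neg_div] using this.const_sub (((m : ℝ) + 1)⁻¹)
  have hseries := hasDerivAt_tsum_of_isPreconnected summable_inv_add_one_sq isOpen_Ioi
    (convex_Ioi 0).isPreconnected hterm
    (fun m y hy => by
      rw [Real.norm_of_nonneg (by positivity)]; exact inv_add_add_one_sq_le (le_of_lt hy) m)
    hx ((summable_inv_add_one_sq.mul_left x).of_norm_bounded
      (abs_inv_add_one_sub_inv_le hx.le)) hx
  have hpsi := ((hasDerivAt_inv hx.ne').const_sub (-eulerMascheroniConstant)).add hseries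
  rw [trigamma_eq_inv_sq_add_tsum hx]
  refine (by simpa using hpsi : HasDerivAt _ _ x).congr_of_eventuallyEq ?_
  filter_upwards [eventually_gt_nhds hx] with y hy
  exact digamma_eq_tsum hy

lemma trigamma_nonneg (x : ℝ) : 0 ≤ trigamma x :=
  tsum_nonneg fun _ => by positivity

lemma trigamma_le_inv_sub_half {x : ℝ} (hx : 1 / 2 < x) : trigamma x ≤ (x - 1 / 2)⁻¹ := by
  refine Real.tsum_le_of_sum_range_le (fun _ => by positivity) fun n => ?_
  have hstep (m : ℕ) : ((x + m) ^ 2)⁻¹ ≤ (x + m - 1 / 2)⁻¹ - (x + (m + 1 : ℕ) - 1 / 2)⁻¹ := by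
    have hm : (0 : ℝ) ≤ m := m.cast_nonneg
    rw [Nat.cast_succ, inv_sub_inv (by linarith) (by linarith)]
    rw [show x + (m + 1) - 1 / 2 - (x + m - 1 / 2) = 1 by ring, one_div]
    exact inv_anti₀ (by nlinarith) (by nlinarith)
  calc ∑ m ∈ Finset.range n, ((x + m) ^ 2)⁻¹
      ≤ ∑ m ∈ Finset.range n, ((x + m - 1 / 2)⁻¹ - (x + (m + 1 : ℕ) - 1 / 2)⁻¹) :=
        Finset.sum_le_sum fun m _ => hstep m
    _ = (x - 1 / 2)⁻¹ - (x + n - 1 / 2)⁻¹ := by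
        simpa using Finset.sum_range_sub' (fun m : ℕ => (x + m - 1 / 2)⁻¹) n
    _ ≤ (x - 1 / 2)⁻¹ := by
        have : 0 ≤ (x + n - 1 / 2)⁻¹ := inv_nonneg.mpr (by linarith [n.cast_nonneg (α := ℝ)])
        linarith

lemma digamma_add_one {x : ℝ} (hx : 0 < x) : digamma (x + 1) = digamma x + x⁻¹ := by
  have hshift : HasDerivAt (fun y => log (Gamma (y + 1))) (digamma (x + 1)) x :=
    (hasDerivAt_log_Gamma (by linarith)).comp_add_const x 1
  refine hshift.unique <|
    ((hasDerivAt_log_Gamma hx).fun_add (hasDerivAt_log hx.ne')).congr_of_eventuallyEq ?_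
  filter_upwards [eventually_gt_nhds hx] with y hy
  rw [Gamma_add_one hy.ne', log_mul hy.ne' (Gamma_pos_of_pos hy).ne', add_comm]

noncomputable def gammaEntropy (μ : ℝ) : ℝ := log (Gamma μ) + μ - (μ - 1) * digamma μ

lemma hasDerivAt_gammaEntropy {x : ℝ} (hx : 0 < x) :
    HasDerivAt gammaEntropy (1 - (x - 1) * trigamma x) x := by
  refine (((hasDerivAt_log_Gamma hx).fun_add (hasDerivAt_id' x)).fun_sub
    (((hasDerivAt_id' x).sub_const 1).fun_mul (hasDerivAt_digamma hx))).congr_deriv ?_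
  ring

lemma inv_half_le_one_sub_mul_trigamma {x : ℝ} (hx : 1 ≤ x) :
    x⁻¹ / 2 ≤ 1 - (x - 1) * trigamma x := by
  have hψ' : (x - 1) * trigamma x ≤ (x - 1) * (x - 1 / 2)⁻¹ :=
    mul_le_mul_of_nonneg_left (trigamma_le_inv_sub_half (by linarith)) (by linarith)
  have h : 0 < x - 1 / 2 := by linarith
  have : x⁻¹ / 2 ≤ 1 - (x - 1) * (x - 1 / 2)⁻¹ := by
    rw [← div_eq_mul_inv, one_sub_div h.ne', inv_eq_one_div, div_div,
      div_le_div_iff₀ (by linarith) h]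
    linarith
  linarith

lemma one_sub_mul_trigamma_pos (x : ℝ) : 0 < 1 - (x - 1) * trigamma x := by
  rcases le_or_gt x 1 with hx1 | hx1
  · nlinarith [trigamma_nonneg x]
  · exact (half_pos (inv_pos.mpr (by linarith))).trans_le
      (inv_half_le_one_sub_mul_trigamma hx1.le)

lemma strictMonoOn_gammaEntropy : StrictMonoOn gammaEntropy (Ioi 0) :=
  strictMonoOn_of_hasDerivWithinAt_pos (convex_Ioi 0)
    (fun _ hx => (hasDerivAt_gammaEntropy hx).continuousAt.continuousWithinAt)
    (fun _ hx => (hasDerivAt_gammaEntropy (interior_subset hx)).hasDerivWithinAt)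
    (fun x _ => one_sub_mul_trigamma_pos x)

lemma gammaEntropy_eq_of_pos {μ : ℝ} (hμ : 0 < μ) :
    gammaEntropy μ = (log (Gamma (μ + 1)) + μ - (μ - 1) * digamma (μ + 1) + 1)
      - (log μ + μ⁻¹) := by
  rw [gammaEntropy, digamma_add_one hμ, Gamma_add_one hμ.ne',
    log_mul hμ.ne' (Gamma_pos_of_pos hμ).ne']
  field_simp
  ring

lemma tendsto_log_add_inv_nhdsGT_zero : Tendsto (fun μ : ℝ => log μ + μ⁻¹) (𝓝[>] 0) atTop := by
  have h : Tendsto (fun μ : ℝ => log μ * μ + 1) (𝓝[>] 0) (𝓝 1) := by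
    simpa using (tendsto_log_mul_rpow_nhdsGT_zero zero_lt_one).add_const 1
  refine (h.pos_mul_atTop one_pos tendsto_inv_nhdsGT_zero).congr' ?_
  filter_upwards [self_mem_nhdsWithin] with μ (hμ : 0 < μ)
  field_simp

lemma tendsto_gammaEntropy_nhdsGT_zero : Tendsto gammaEntropy (𝓝[>] 0) atBot := by
  have hcont : ContinuousAt
      (fun μ => log (Gamma (μ + 1)) + μ - (μ - 1) * digamma (μ + 1) + 1) 0 := by
    have hshift : ContinuousAt (fun μ : ℝ => μ + 1) 0 := by fun_prop
    have hlogΓ := (hasDerivAt_log_Gamma one_pos).continuousAt.comp_of_eq hshift (zero_add 1)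
    have hψ := (hasDerivAt_digamma one_pos).continuousAt.comp_of_eq hshift (zero_add 1)
    exact ((hlogΓ.add continuousAt_id).sub ((continuousAt_id.sub continuousAt_const).mul hψ)).add
      continuousAt_const
  refine ((hcont.tendsto.mono_left nhdsWithin_le_nhds).add_atBot
    (tendsto_neg_atBot_iff.mpr tendsto_log_add_inv_nhdsGT_zero)).congr' ?_
  filter_upwards [self_mem_nhdsWithin] with μ (hμ : 0 < μ)
  rw [gammaEntropy_eq_of_pos hμ]
  ring

lemma monotoneOn_gammaEntropy_sub_half_log :
    MonotoneOn (fun μ => gammaEntropy μ - log μ / 2) (Ici 1) := by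
  have hderiv {x : ℝ} (hx : 1 ≤ x) : HasDerivAt (fun μ => gammaEntropy μ - log μ / 2)
      (1 - (x - 1) * trigamma x - x⁻¹ / 2) x :=
    (hasDerivAt_gammaEntropy (by linarith)).sub ((hasDerivAt_log (by positivity)).div_const 2)
  refine monotoneOn_of_hasDerivWithinAt_nonneg (convex_Ici 1)
    (f' := fun x => 1 - (x - 1) * trigamma x - x⁻¹ / 2)
    (fun _ hx => (hderiv hx).continuousAt.continuousWithinAt) ?_ ?_ <;> rw [interior_Ici]
  · exact fun _ hx => (hderiv hx.le).hasDerivWithinAt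
  · exact fun x hx => by linarith [inv_half_le_one_sub_mul_trigamma hx.le]

lemma tendsto_gammaEntropy_atTop : Tendsto gammaEntropy atTop atTop := by
  have hgrowth : Tendsto (fun μ => gammaEntropy 1 + log μ / 2) atTop atTop :=
    tendsto_atTop_add_const_left _ _ (tendsto_log_atTop.atTop_div_const two_pos)
  refine tendsto_atTop_mono' atTop ?_ hgrowth
  filter_upwards [eventually_ge_atTop 1] with μ hμ
  have := monotoneOn_gammaEntropy_sub_half_log self_mem_Ici hμ hμ
  simp only [log_one, zero_div, sub_zero] at this
  linarith

/-- `S(μ) = log Γ(μ) + μ − (μ−1)ψ(μ)` is strictly increasing on `(0,∞)`,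
with `S(μ) → −∞` as `μ → 0⁺` and `S(μ) → +∞` as `μ → ∞`. -/
theorem gamma_entropy_shape_monotone :
    StrictMonoOn (fun μ : ℝ => Real.log (Real.Gamma μ) + μ - (μ - 1) * digamma μ)
        (Set.Ioi 0) ∧
      Tendsto (fun μ : ℝ => Real.log (Real.Gamma μ) + μ - (μ - 1) * digamma μ)
        (nhdsWithin 0 (Set.Ioi 0)) atBot ∧
      Tendsto (fun μ : ℝ => Real.log (Real.Gamma μ) + μ - (μ - 1) * digamma μ)
        atTop atTop :=
  ⟨strictMonoOn_gammaEntropy, tendsto_gammaEntropy_nhdsGT_zero, tendsto_gammaEntropy_atTop⟩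
end

section
/- The limit as λ → ∞ of e^{−λ} Σ_{i=1}^∞ (λ^i/i!) log(i+1) − log λ equals 0. Equivalently, E[log(X_λ + 1)] − log λ → 0 as λ → ∞, where X_λ is Poisson with mean λ. -/
/-!
With weights `λⁿ / n!`, whose sum is `e^λ`, bound `log (n + 1)` by tangent lines of the concave
logarithm: from above by the tangent at `λ + 1`, which is affine in `n + 1`, and from below by
`log λ + 1 - λ / (n + 1)`, the tangent at `λ` read as a function of `1 / (n + 1)`. The weighted sums
of `n + 1` and of `λ / (n + 1)` are `(λ + 1) e^λ` and `e^λ - 1`, which gives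
`log λ + e^{-λ} ≤ E[log (X_λ + 1)] ≤ log (λ + 1) ≤ log λ + 1 / λ`.
-/

open Filter Real
open scoped Nat

lemma log_sub_log_le_div_sub_one {a x : ℝ} (ha : 0 < a) (hx : 0 < x) :
    log x - log a ≤ x / a - 1 := by
  rw [← log_div hx.ne' ha.ne']
  exact log_le_sub_one_of_pos (div_pos hx ha)

lemma hasSum_pow_div_factorial (l : ℝ) : HasSum (fun n : ℕ => l ^ n / n !) (exp l) := by
  rw [exp_eq_exp_ℝ]
  exact NormedSpace.expSeries_div_hasSum_exp l

lemma pow_succ_div_factorial_succ (l : ℝ) (n : ℕ) :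
    l ^ (n + 1) / (n + 1)! = l ^ n / n ! * (l / (n + 1)) := by
  push_cast [Nat.factorial_succ, pow_succ]
  field_simp

lemma hasSum_pow_div_factorial_mul_div_succ (l : ℝ) :
    HasSum (fun n : ℕ => l ^ n / n ! * (l / (n + 1))) (exp l - 1) := by
  simp_rw [← pow_succ_div_factorial_succ]
  simpa using
    (hasSum_nat_add_iff' (f := fun n : ℕ => l ^ n / n !) 1).mpr (hasSum_pow_div_factorial l)

lemma hasSum_pow_div_factorial_mul_succ (l : ℝ) :
    HasSum (fun n : ℕ => l ^ n / n ! * (n + 1)) ((l + 1) * exp l) := by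
  have hshift : HasSum (fun n : ℕ => l ^ (n + 1) / (n + 1)! * ((n + 1 : ℕ) : ℝ)) (l * exp l) := by
    have hterm (n : ℕ) : l ^ (n + 1) / (n + 1)! * ((n + 1 : ℕ) : ℝ) = l * (l ^ n / n !) := by
      rw [pow_succ_div_factorial_succ]
      push_cast
      field_simp
    simpa only [hterm] using (hasSum_pow_div_factorial l).mul_left l
  have hmean := (hasSum_nat_add_iff (f := fun n : ℕ => l ^ n / n ! * n) 1).mp hshift
  simp only [Finset.sum_range_one, CharP.cast_eq_zero, mul_zero, add_zero] at hmean
  simpa [mul_add, add_mul] using hmean.add (hasSum_pow_div_factorial l)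

lemma summable_pow_div_factorial_mul_log_succ {l : ℝ} (hl : 0 ≤ l) :
    Summable fun n : ℕ => l ^ n / n ! * log (n + 1) :=
  (hasSum_pow_div_factorial_mul_succ l).summable.of_nonneg_of_le
    (fun n => mul_nonneg (by positivity) (log_nonneg (by simp)))
    (fun n => mul_le_mul_of_nonneg_left (log_le_self (by positivity)) (by positivity))

lemma tsum_pow_div_factorial_mul_log_succ_le {l : ℝ} (hl : 0 ≤ l) :
    ∑' n : ℕ, l ^ n / n ! * log (n + 1) ≤ exp l * log (l + 1) := by
  have htangent (n : ℕ) : l ^ n / n ! * log (n + 1) ≤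
      (log (l + 1) - 1) * (l ^ n / n !) + (l + 1)⁻¹ * (l ^ n / n ! * (n + 1)) := by
    have hlog : log (n + 1) - log (l + 1) ≤ (n + 1) / (l + 1) - 1 :=
      log_sub_log_le_div_sub_one (by positivity) (by positivity)
    have := mul_le_mul_of_nonneg_left hlog (by positivity : 0 ≤ l ^ n / n !)
    linear_combination this
  calc ∑' n : ℕ, l ^ n / n ! * log (n + 1)
      ≤ (log (l + 1) - 1) * exp l + (l + 1)⁻¹ * ((l + 1) * exp l) :=
        hasSum_le htangent (summable_pow_div_factorial_mul_log_succ hl).hasSum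
          (((hasSum_pow_div_factorial l).mul_left _).add
            ((hasSum_pow_div_factorial_mul_succ l).mul_left _))
    _ = exp l * log (l + 1) := by
        field_simp
        ring

lemma exp_mul_log_add_one_le_tsum_pow_div_factorial_mul_log_succ {l : ℝ} (hl : 0 < l) :
    exp l * log l + 1 ≤ ∑' n : ℕ, l ^ n / n ! * log (n + 1) := by
  have htangent (n : ℕ) : (log l + 1) * (l ^ n / n !) - l ^ n / n ! * (l / (n + 1)) ≤
      l ^ n / n ! * log (n + 1) := by
    have hlog : log l - log (n + 1) ≤ l / (n + 1) - 1 :=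
      log_sub_log_le_div_sub_one (by positivity) hl
    have := mul_le_mul_of_nonneg_left hlog (by positivity : 0 ≤ l ^ n / n !)
    linear_combination this
  calc exp l * log l + 1 = (log l + 1) * exp l - (exp l - 1) := by ring
    _ ≤ ∑' n : ℕ, l ^ n / n ! * log (n + 1) :=
        hasSum_le htangent (((hasSum_pow_div_factorial l).mul_left _).sub
          (hasSum_pow_div_factorial_mul_div_succ l))
          (summable_pow_div_factorial_mul_log_succ hl.le).hasSum

lemma tsum_pow_succ_div_factorial_succ_mul_log_succ {l : ℝ} (hl : 0 ≤ l) :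
    ∑' i : ℕ, l ^ (i + 1) / (i + 1)! * log ((i + 1 : ℕ) + 1) =
      ∑' n : ℕ, l ^ n / n ! * log (n + 1) := by
  rw [(summable_pow_div_factorial_mul_log_succ hl).tsum_eq_zero_add]
  simp

/-- `e^{−λ} Σ_{i≥1} (λ^i/i!) log(i+1) − log λ → 0` as `λ → ∞`. -/
theorem poisson_entropy_deriv_tendsto_zero :
    Tendsto
      (fun l : ℝ =>
        Real.exp (-l) * (∑' i : ℕ, l ^ (i + 1) / (Nat.factorial (i + 1)) *
            Real.log ((i + 1 : ℕ) + 1))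
          - Real.log l)
      atTop (nhds 0) := by
  refine tendsto_of_tendsto_of_tendsto_of_le_of_le' tendsto_const_nhds tendsto_inv_atTop_zero
    ?_ ?_ <;> filter_upwards [eventually_gt_atTop 0] with l hl <;>
    rw [tsum_pow_succ_div_factorial_succ_mul_log_succ hl.le, exp_neg]
  · have hlower := exp_mul_log_add_one_le_tsum_pow_div_factorial_mul_log_succ hl
    rw [sub_nonneg, le_inv_mul_iff₀ (exp_pos l)]
    linarith
  · have hupper := tsum_pow_div_factorial_mul_log_succ_le hl.le
    have hlog : log (l + 1) - log l ≤ (l + 1) / l - 1 := log_sub_log_le_div_sub_one hl (by linarith)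
    rw [← inv_mul_le_iff₀ (exp_pos l)] at hupper
    rw [add_div, div_self hl.ne', one_div] at hlog
    linarith
end
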